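/- arXiv:1105.4472 — 3 statements merged into one kernel-verified Lean document; each statement's English description precedes it below -/
import Mathlib

section
/- The determinant of the g × g matrix whose rows are indexed by h = 0,...,g-1 and whose columns are: for j = 2,...,[g/2] the column (q_{h-1;1,j})_h, for j = [g/2]+1,...,g-1 the column (q_{h-2;1,j})_h, the column (q_{h-2;2,[g/2]+1})_h, and the column (q_{h-3;g-2,g-1})_h (with q_{m;i,j} := Σ_{l=0}^{m} a_i^l a_j^{m-l}, and q with negative index = 0), equals, up to sign, V(a_3,...,a_{g-1}) · ∏_{r=1, r ≠ 2, [g/2]+1}^{g-1}(a_r - a_2) · ∏_{s=3}^{[g/2]} a_s · ∏_{j=1}^{g-3} a_j, where V denotes the Vandermonde determinant. -/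
/-!
Subtracting `a₁` times each row from the next turns the columns `(q_{h;1,j})_h` into the power
columns `(a_j^h)_h`, shifted down by one row for `j > ⌊g/2⌋`. After scaling the last two columns
by `(a₂ - a_{k+1}) a₂` and `(a_{g-2} - a_{g-1}) a_{g-2} a_{g-1}` (where `k = ⌊g/2⌋`), the identity
`(x - y) q_{m;x,y} = x^{m+1} - y^{m+1}` writes them as combinations of the power columns of
`a₂, a_{k+1}, a_{g-2}, a_{g-1}` and of the unit vectors `e₀`, `e₁`. Expanding along `e₀` and `e₁`
leaves a Vandermonde matrix in `a₂, …, a_{g-1}` times a diagonal matrix. This proves the formula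
multiplied by the scaling factor, in every commutative ring; at the generic point of
`ℤ[X₁, X₂, …]` the factor is nonzero and can be cancelled, and specializing gives the formula
everywhere.
-/

open Finset Matrix

namespace BinaryCurveQuadrics

variable {R : Type*} [CommRing R]

def geomSum₂ (x y : R) (n : ℕ) : R := ∑ i ∈ range n, x ^ i * y ^ (n - 1 - i)

@[simp] lemma geomSum₂_zero (x y : R) : geomSum₂ x y 0 = 0 := rfl

lemma geomSum₂_succ (x y : R) (n : ℕ) : geomSum₂ x y (n + 1) = x * geomSum₂ x y n + y ^ n := by
  rw [geomSum₂, geomSum₂, geom_sum₂_comm, Nat.add_sub_cancel, geom_sum₂_succ_eq, geom_sum₂_comm]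
  ring

lemma geomSum₂_mul_sub (x y : R) (n : ℕ) : geomSum₂ x y n * (x - y) = x ^ n - y ^ n :=
  geom_sum₂_mul x y n

lemma map_geomSum₂ {S : Type*} [CommRing S] (φ : R →+* S) (x y : R) (n : ℕ) :
    φ (geomSum₂ x y n) = geomSum₂ (φ x) (φ y) n :=
  φ.map_geom_sum₂ x y n

lemma ite_sum_eq_geomSum₂ (x y : R) (m : ℤ) :
    (if m < 0 then 0 else ∑ l ∈ range (m.toNat + 1), x ^ l * y ^ (m.toNat - l)) =
      geomSum₂ x y (m + 1).toNat := by
  split_ifs with hm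
  · rw [show (m + 1).toNat = 0 by omega, geomSum₂_zero]
  · rw [show (m + 1).toNat = m.toNat + 1 by omega, geomSum₂, Nat.add_sub_cancel]

lemma prod_Ioi_fin_eq_prod_filter_lt {M : Type*} [CommMonoid M] (f : ℕ → ℕ → M) (p m : ℕ) :
    ∏ i : Fin m, ∏ j ∈ Ioi i, f (p + i) (p + j) =
      ∏ q ∈ (Ico p (p + m) ×ˢ Ico p (p + m)).filter (fun q => q.1 < q.2), f q.1 q.2 := by
  rw [prod_sigma']
  refine prod_bij' (fun q _ => (p + q.1, p + q.2))
    (fun q hq => ⟨⟨q.1 - p, ?_⟩, ⟨q.2 - p, ?_⟩⟩) ?_ ?_ ?_ ?_ (fun _ _ => rfl)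
  all_goals simp only [mem_filter, mem_product, mem_Ico, mem_sigma, mem_univ, mem_Ioi, true_and,
    Fin.lt_def] at *
  · omega
  · omega
  · rintro ⟨i, j⟩ h
    dsimp only at h ⊢
    omega
  · intro q h
    omega
  · rintro ⟨i, j⟩ -
    simp
  · rintro ⟨x, y⟩ h
    simp only [Prod.mk.injEq]
    omega

lemma det_eq_of_col_eq_single {m : ℕ} (A : Matrix (Fin (m + 1)) (Fin (m + 1)) R)
    {i j : Fin (m + 1)} (hA : A.col j = Pi.single i 1) :
    A.det = (-1) ^ (i + j : ℕ) * (A.submatrix i.succAbove j.succAbove).det := by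
  have hA' (r : Fin (m + 1)) : A r j = (Pi.single i 1 : Fin (m + 1) → R) r := congrFun hA r
  rw [det_succ_column A j, sum_eq_single i]
  · simp [hA']
  · intro r _ hr
    simp [hA', hr]
  · simp

def RowReduces {m : ℕ} (x : R) (A B : Matrix (Fin (m + 1)) (Fin (m + 1)) R)
    (j : Fin (m + 1)) : Prop :=
  A 0 j = B 0 j ∧ ∀ i : Fin m, A i.succ j = B i.succ j + x * A i.castSucc j

lemma det_eq_of_forall_rowReduces {m : ℕ} {x : R} {A B : Matrix (Fin (m + 1)) (Fin (m + 1)) R}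
    (h : ∀ j, RowReduces x A B j) : A.det = B.det :=
  det_eq_of_forall_row_eq_smul_add_pred (fun _ => x) (fun j => (h j).1) (fun i j => (h j).2 i)

/-- The matrix of formula (15), with `q_{m;i,j} = geomSum₂ (a i) (a j) (m + 1)`; at `h = 0` the
truncated `h - 1` still gives `q_{-2;g-2,g-1} = geomSum₂ _ _ 0 = 0`. -/
def quadricMatrix (g : ℕ) (a : ℕ → R) : Matrix (Fin g) (Fin g) R :=
  of fun h c =>
    if (c : ℕ) + 2 ≤ g / 2 then geomSum₂ (a 1) (a (c + 2)) (h + 1)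
    else if (c : ℕ) ≤ g - 3 then geomSum₂ (a 1) (a (c + 2)) h
    else if (c : ℕ) = g - 2 then geomSum₂ (a 2) (a (g / 2 + 1)) h
    else geomSum₂ (a (g - 2)) (a (g - 1)) (h - 1)

def quadricDetFormula (g : ℕ) (a : ℕ → R) : R :=
  (∏ p ∈ (Icc 3 (g - 1) ×ˢ Icc 3 (g - 1)).filter (fun p => p.1 < p.2), (a p.2 - a p.1)) *
    (∏ r ∈ ((Icc 1 (g - 1)).erase 2).erase (g / 2 + 1), (a r - a 2)) *
    (∏ s ∈ Icc 3 (g / 2), a s) * (∏ j ∈ Icc 1 (g - 3), a j)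

def powerMatrix (n : ℕ) (a : ℕ → R) : Matrix (Fin (n + 2)) (Fin (n + 2)) R :=
  of fun h c =>
    if (c : ℕ) + 2 ≤ (n + 2) / 2 then a (c + 2) ^ (h : ℕ)
    else if (c : ℕ) < n then (if (h : ℕ) = 0 then 0 else a (c + 2) ^ ((h : ℕ) - 1))
    else if (c : ℕ) = n then (if (h : ℕ) = 0 then 1 else 0)
    else if (h : ℕ) = 1 then 1 else 0

/-- Multiplying `powerMatrix` by this matrix reproduces the last two columns of the row-reduced
`quadricMatrix`, scaled by `columnScale`. -/
def columnOps (n : ℕ) (a : ℕ → R) : Matrix (Fin (n + 2)) (Fin (n + 2)) R :=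
  ((1 : Matrix (Fin (n + 2)) (Fin (n + 2)) R).updateCol (Fin.last n).castSucc
      ((a 2 - a 1) • Pi.single 0 1
        - (a 2 * (a ((n + 2) / 2 + 1) - a 1)) • Pi.single ⟨(n + 2) / 2 - 1, by omega⟩ 1
        + (a 1 - a 2) • Pi.single (Fin.last n).castSucc 1)).updateCol (Fin.last (n + 1))
    ((a (n + 1) * (a n - a 1)) • Pi.single ⟨n - 2, by omega⟩ 1
      - (a n * (a (n + 1) - a 1)) • Pi.single ⟨n - 1, by omega⟩ 1
      + (a 1 * (a (n + 1) - a n)) • Pi.single (Fin.last (n + 1)) 1)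

def columnScale (n : ℕ) (a : ℕ → R) (c : Fin (n + 2)) : R :=
  if (c : ℕ) = n then (a 2 - a ((n + 2) / 2 + 1)) * a 2
  else if (c : ℕ) = n + 1 then (a n - a (n + 1)) * a n * a (n + 1) else 1

lemma det_powerMatrix (n : ℕ) (a : ℕ → R) :
    (powerMatrix n a).det = (vandermonde fun c : Fin n => a (c + 2)).det *
      ∏ c : Fin n, if (c : ℕ) + 2 ≤ (n + 2) / 2 then a (c + 2) ^ 2 else a (c + 2) := by
  rw [det_eq_of_col_eq_single _ (i := 1) (j := Fin.last (n + 1)) ?_,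
    det_eq_of_col_eq_single _ (i := 0) (j := Fin.last n) ?_]
  · have hW : ((powerMatrix n a).submatrix (Fin.succAbove 1) (Fin.last (n + 1)).succAbove).submatrix
        (Fin.succAbove 0) (Fin.last n).succAbove =
          (vandermonde fun c : Fin n => a (c + 2))ᵀ * diagonal fun c : Fin n =>
            if (c : ℕ) + 2 ≤ (n + 2) / 2 then a (c + 2) ^ 2 else a (c + 2) := by
      ext r c
      simp only [powerMatrix, submatrix_apply, transpose_apply, of_apply, mul_diagonal,
        vandermonde_apply, Fin.succAbove_last, Fin.val_castSucc, Fin.zero_succAbove,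
        Fin.one_succAbove_succ, Fin.val_succ, Nat.add_one_ne_zero, if_false, Nat.add_sub_cancel,
        c.isLt, if_true]
      split_ifs <;> ring
    rw [hW, det_mul, det_transpose, det_diagonal, Fin.val_last, Fin.val_last, Fin.val_zero,
      Fin.val_one, ← mul_assoc, ← pow_add, Even.neg_one_pow ⟨n + 1, by ring⟩, one_mul]
  · ext r
    have hn : ¬ n + 2 ≤ (n + 2) / 2 := by omega
    simp only [col_apply, submatrix_apply, Fin.succAbove_last, powerMatrix, of_apply,
      Fin.val_castSucc, Fin.val_last, if_neg hn, lt_irrefl, if_false, if_true, Pi.single_apply,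
      Fin.val_eq_zero_iff, Fin.succAbove_eq_zero_iff one_ne_zero]
  · ext r
    have hn : ¬ n + 1 + 2 ≤ (n + 2) / 2 := by omega
    simp only [col_apply, powerMatrix, of_apply, Fin.val_last, if_neg hn, Pi.single_apply,
      Fin.ext_iff, Fin.val_one]
    rw [if_neg (by omega), if_neg (by omega)]

lemma det_columnOps {n : ℕ} (hn : 1 ≤ n) (a : ℕ → R) :
    (columnOps n a).det = (a 1 - a 2) * (a 1 * (a (n + 1) - a n)) := by
  rw [det_of_isUpperTriangular]
  · have hdiag (i : Fin n) : columnOps n a i.castSucc.castSucc i.castSucc.castSucc = 1 := by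
      have h1 : (i : ℕ) ≠ n + 1 := by omega
      have h2 : (i : ℕ) ≠ n := by omega
      simp [columnOps, Fin.ext_iff, one_apply, h1, h2]
    have h1 : n ≠ 0 := by omega
    have h2 : n ≠ n / 2 := by omega
    have h3 : n + 1 ≠ n - 2 := by omega
    rw [Fin.prod_univ_castSucc, Fin.prod_univ_castSucc]
    simp only [hdiag, prod_const_one, one_mul]
    simp [columnOps, Fin.ext_iff, h1, h2, h3]
  · intro i j hij
    rw [id, id, Fin.lt_def] at hij
    have := i.isLt
    simp only [columnOps, updateCol_apply, Fin.ext_iff, one_apply, Pi.add_apply, Pi.sub_apply,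
      Pi.smul_apply, Pi.single_apply, Fin.val_last, Fin.val_castSucc, Fin.val_zero]
    split_ifs <;> first | omega | simp

lemma prod_columnScale (n : ℕ) (a : ℕ → R) : ∏ c, columnScale n a c =
    (a 2 - a ((n + 2) / 2 + 1)) * a 2 * ((a n - a (n + 1)) * a n * a (n + 1)) := by
  have h (c : Fin n) : columnScale n a c.castSucc.castSucc = 1 := by
    simp [columnScale, c.isLt.ne, (c.isLt.trans n.lt_succ_self).ne]
  rw [Fin.prod_univ_castSucc, Fin.prod_univ_castSucc]
  simp only [h, prod_const_one, one_mul]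
  simp [columnScale]

section Entries

variable {n : ℕ} (a : ℕ → R) (h : Fin (n + 2)) {c : Fin (n + 2)}

lemma quadricMatrix_apply_of_add_two_le (hc : (c : ℕ) + 2 ≤ (n + 2) / 2) :
    quadricMatrix (n + 2) a h c = geomSum₂ (a 1) (a (c + 2)) (h + 1) := by
  rw [quadricMatrix, of_apply, if_pos hc]

lemma quadricMatrix_apply_of_lt (hc : (n + 2) / 2 < c + 2) (hc' : (c : ℕ) < n) :
    quadricMatrix (n + 2) a h c = geomSum₂ (a 1) (a (c + 2)) h := by
  rw [quadricMatrix, of_apply, if_neg (by omega), if_pos (by omega)]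

lemma quadricMatrix_apply_of_eq (hn : 1 ≤ n) (hc : (c : ℕ) = n) :
    quadricMatrix (n + 2) a h c = geomSum₂ (a 2) (a ((n + 2) / 2 + 1)) h := by
  rw [quadricMatrix, of_apply, if_neg (by omega), if_neg (by omega), if_pos (by omega)]

lemma quadricMatrix_apply_of_eq_add_one (hc : (c : ℕ) = n + 1) :
    quadricMatrix (n + 2) a h c = geomSum₂ (a n) (a (n + 1)) (h - 1) := by
  rw [quadricMatrix, of_apply, if_neg (by omega), if_neg (by omega), if_neg (by omega)]
  simp

lemma powerMatrix_apply_of_add_two_le (hc : (c : ℕ) + 2 ≤ (n + 2) / 2) :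
    powerMatrix n a h c = a (c + 2) ^ (h : ℕ) := by
  rw [powerMatrix, of_apply, if_pos hc]

lemma powerMatrix_apply_of_lt (hc : (n + 2) / 2 < c + 2) (hc' : (c : ℕ) < n) :
    powerMatrix n a h c = if (h : ℕ) = 0 then 0 else a (c + 2) ^ ((h : ℕ) - 1) := by
  rw [powerMatrix, of_apply, if_neg (by omega), if_pos hc']

lemma powerMatrix_apply_of_eq (hc : (c : ℕ) = n) :
    powerMatrix n a h c = if (h : ℕ) = 0 then 1 else 0 := by
  rw [powerMatrix, of_apply, if_neg (by omega), if_neg (by omega), if_pos hc]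

lemma powerMatrix_apply_of_eq_add_one (hc : (c : ℕ) = n + 1) :
    powerMatrix n a h c = if (h : ℕ) = 1 then 1 else 0 := by
  rw [powerMatrix, of_apply, if_neg (by omega), if_neg (by omega), if_neg (by omega)]

lemma powerMatrix_mul_columnOps_apply_of_lt (hc : (c : ℕ) < n) :
    (powerMatrix n a * columnOps n a) h c = powerMatrix n a h c := by
  rw [columnOps, mul_updateCol, mul_updateCol, mul_one, updateCol_ne, updateCol_ne] <;>
  simp [Fin.ext_iff] <;> omega

lemma powerMatrix_mul_columnOps_apply_castSucc_last (hn : 2 ≤ n) :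
    (powerMatrix n a * columnOps n a) h (Fin.last n).castSucc =
      (a 2 - a 1) * a 2 ^ (h : ℕ)
        - a 2 * (a ((n + 2) / 2 + 1) - a 1) *
          (if (h : ℕ) = 0 then 0 else a ((n + 2) / 2 + 1) ^ ((h : ℕ) - 1))
        + (a 1 - a 2) * (if (h : ℕ) = 0 then 1 else 0) := by
  rw [columnOps, mul_updateCol, mul_updateCol, mul_one, updateCol_ne (Fin.castSucc_lt_last _).ne,
    updateCol_self]
  simp only [mulVec_add, mulVec_sub, mulVec_smul, mulVec_single_one, Pi.add_apply, Pi.sub_apply,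
    Pi.smul_apply, col_apply, smul_eq_mul]
  rw [powerMatrix_apply_of_add_two_le _ _ (by simp only [Fin.val_zero]; omega),
    powerMatrix_apply_of_lt _ _ (by dsimp only; omega) (by dsimp only; omega),
    powerMatrix_apply_of_eq _ _ (by simp), show (n + 2) / 2 - 1 + 2 = (n + 2) / 2 + 1 by omega]
  simp only [Fin.val_zero, zero_add]

lemma powerMatrix_mul_columnOps_apply_last (hn : 3 ≤ n) :
    (powerMatrix n a * columnOps n a) h (Fin.last (n + 1)) =
      a (n + 1) * (a n - a 1) * (if (h : ℕ) = 0 then 0 else a n ^ ((h : ℕ) - 1))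
        - a n * (a (n + 1) - a 1) * (if (h : ℕ) = 0 then 0 else a (n + 1) ^ ((h : ℕ) - 1))
        + a 1 * (a (n + 1) - a n) * (if (h : ℕ) = 1 then 1 else 0) := by
  rw [columnOps, mul_updateCol, mul_updateCol, mul_one, updateCol_self]
  simp only [mulVec_add, mulVec_sub, mulVec_smul, mulVec_single_one, Pi.add_apply, Pi.sub_apply,
    Pi.smul_apply, col_apply, smul_eq_mul]
  rw [powerMatrix_apply_of_lt _ _ (by dsimp only; omega) (by dsimp only; omega),
    powerMatrix_apply_of_lt _ _ (by dsimp only; omega) (by dsimp only; omega),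
    powerMatrix_apply_of_eq_add_one _ _ (by simp), show n - 2 + 2 = n by omega,
    show n - 1 + 2 = n + 1 by omega]

end Entries

section RowReduction

variable {n : ℕ} (a : ℕ → R) {j : Fin (n + 2)}

lemma rowReduces_of_add_two_le (hj : (j : ℕ) + 2 ≤ (n + 2) / 2) :
    RowReduces (a 1) (quadricMatrix (n + 2) a * diagonal (columnScale n a))
      (powerMatrix n a * columnOps n a) j := by
  have hD : columnScale n a j = 1 := by rw [columnScale, if_neg (by omega), if_neg (by omega)]
  simp only [RowReduces, mul_diagonal, hD, mul_one, quadricMatrix_apply_of_add_two_le a _ hj,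
    powerMatrix_mul_columnOps_apply_of_lt a _ (by omega : (j : ℕ) < n),
    powerMatrix_apply_of_add_two_le a _ hj, Fin.val_succ, Fin.val_castSucc, Fin.val_zero]
  exact ⟨by simp [geomSum₂], fun i => by rw [geomSum₂_succ]; ring⟩

lemma rowReduces_of_lt (hj : (n + 2) / 2 < j + 2) (hj' : (j : ℕ) < n) :
    RowReduces (a 1) (quadricMatrix (n + 2) a * diagonal (columnScale n a))
      (powerMatrix n a * columnOps n a) j := by
  have hD : columnScale n a j = 1 := by rw [columnScale, if_neg (by omega), if_neg (by omega)]
  simp only [RowReduces, mul_diagonal, hD, mul_one, quadricMatrix_apply_of_lt a _ hj hj',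
    powerMatrix_mul_columnOps_apply_of_lt a _ hj', powerMatrix_apply_of_lt a _ hj hj',
    Fin.val_succ, Fin.val_castSucc, Fin.val_zero]
  exact ⟨by simp, fun i => by rw [geomSum₂_succ]; simp; ring⟩

lemma rowReduces_of_eq (hn : 2 ≤ n) (hj : (j : ℕ) = n) :
    RowReduces (a 1) (quadricMatrix (n + 2) a * diagonal (columnScale n a))
      (powerMatrix n a * columnOps n a) j := by
  obtain rfl : j = (Fin.last n).castSucc := Fin.ext hj
  have hD : columnScale n a (Fin.last n).castSucc = (a 2 - a ((n + 2) / 2 + 1)) * a 2 := by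
    simp [columnScale]
  simp only [RowReduces, mul_diagonal, hD, quadricMatrix_apply_of_eq a _ (by omega) hj,
    powerMatrix_mul_columnOps_apply_castSucc_last a _ hn, Fin.val_succ, Fin.val_castSucc,
    Fin.val_zero]
  refine ⟨by simp, fun i => ?_⟩
  simp only [Nat.add_one_ne_zero, if_false, Nat.add_sub_cancel, mul_zero, add_zero]
  linear_combination a 2 * geomSum₂_mul_sub (a 2) (a ((n + 2) / 2 + 1)) (i + 1)
    - a 1 * a 2 * geomSum₂_mul_sub (a 2) (a ((n + 2) / 2 + 1)) i

lemma rowReduces_of_eq_add_one (hn : 3 ≤ n) (hj : (j : ℕ) = n + 1) :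
    RowReduces (a 1) (quadricMatrix (n + 2) a * diagonal (columnScale n a))
      (powerMatrix n a * columnOps n a) j := by
  obtain rfl : j = Fin.last (n + 1) := Fin.ext hj
  have hD : columnScale n a (Fin.last (n + 1)) = (a n - a (n + 1)) * a n * a (n + 1) := by
    simp [columnScale]
  simp only [RowReduces, mul_diagonal, hD, quadricMatrix_apply_of_eq_add_one a _ hj,
    powerMatrix_mul_columnOps_apply_last a _ hn, Fin.val_succ, Fin.val_castSucc, Fin.val_zero]
  refine ⟨by simp, fun ⟨i, hi⟩ => ?_⟩
  rcases i with _ | i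
  · simp
    ring
  · simp only [Nat.add_one_ne_zero, if_false, Nat.add_sub_cancel]
    rw [if_neg (show i + 1 + 1 ≠ 1 by omega), mul_zero, add_zero]
    linear_combination a n * a (n + 1) * geomSum₂_mul_sub (a n) (a (n + 1)) (i + 1)
      - a 1 * a n * a (n + 1) * geomSum₂_mul_sub (a n) (a (n + 1)) i

lemma det_quadricMatrix_mul (hn : 3 ≤ n) :
    (quadricMatrix (n + 2) a).det *
        ((a 2 - a ((n + 2) / 2 + 1)) * a 2 * ((a n - a (n + 1)) * a n * a (n + 1))) =
      (vandermonde fun c : Fin n => a (c + 2)).det *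
        (∏ c : Fin n, if (c : ℕ) + 2 ≤ (n + 2) / 2 then a (c + 2) ^ 2 else a (c + 2)) *
        ((a 1 - a 2) * (a 1 * (a (n + 1) - a n))) := by
  have hrow : ∀ j, RowReduces (a 1) (quadricMatrix (n + 2) a * diagonal (columnScale n a))
      (powerMatrix n a * columnOps n a) j := by
    intro j
    obtain hj | hj | hj | hj : (j : ℕ) + 2 ≤ (n + 2) / 2 ∨ ((n + 2) / 2 < j + 2 ∧ (j : ℕ) < n) ∨
        (j : ℕ) = n ∨ (j : ℕ) = n + 1 := by omega
    · exact rowReduces_of_add_two_le a hj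
    · exact rowReduces_of_lt a hj.1 hj.2
    · exact rowReduces_of_eq a (by omega) hj
    · exact rowReduces_of_eq_add_one a hn hj
  have h := det_eq_of_forall_rowReduces hrow
  rwa [det_mul, det_mul, det_diagonal, prod_columnScale, det_powerMatrix,
    det_columnOps (by omega)] at h

end RowReduction

lemma det_vandermonde_succ_shift (a : ℕ → R) (p m : ℕ) :
    (vandermonde fun c : Fin (m + 1) => a (c + p)).det =
      (∏ r ∈ Ico (p + 1) (p + 1 + m), (a r - a p)) *
        ∏ q ∈ (Ico (p + 1) (p + 1 + m) ×ˢ Ico (p + 1) (p + 1 + m)).filter (fun q => q.1 < q.2),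
          (a q.2 - a q.1) := by
  rw [det_vandermonde, Fin.prod_univ_succ, Fin.prod_Ioi_zero,
    ← prod_Ioi_fin_eq_prod_filter_lt (fun i j => a j - a i) (p + 1) m, prod_Ico_eq_prod_range,
    add_tsub_cancel_left, ← Fin.prod_univ_eq_prod_range (fun j => a (p + 1 + j) - a p)]
  simp only [Fin.prod_Ioi_succ, Fin.val_succ, Fin.val_zero, zero_add,
    show ∀ j : ℕ, j + 1 + p = p + 1 + j from fun j => by omega]

lemma prod_ite_sq_eq {k m : ℕ} (hk : 2 ≤ k) (hkm : k ≤ m) (a : ℕ → R) :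
    (∏ c : Fin (m + 1), if (c : ℕ) + 2 ≤ k then a (c + 2) ^ 2 else a (c + 2)) =
      (a 2 * ∏ r ∈ Ico 3 (k + 1), a r) ^ 2 *
        ((∏ r ∈ Ico (k + 1) (m + 1), a r) * a (m + 1) * a (m + 2)) := by
  have hIco : (∏ c : Fin (m + 1), if (c : ℕ) + 2 ≤ k then a (c + 2) ^ 2 else a (c + 2)) =
      ∏ r ∈ Ico 2 (m + 3), if r ≤ k then a r ^ 2 else a r := by
    rw [prod_Ico_eq_prod_range, Fin.prod_univ_eq_prod_range
      (fun c => if c + 2 ≤ k then a (c + 2) ^ 2 else a (c + 2))]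
    exact prod_congr rfl fun c _ => by rw [add_comm]
  have hsq : (∏ r ∈ Ico 2 (k + 1), if r ≤ k then a r ^ 2 else a r) =
      (∏ r ∈ Ico 2 (k + 1), a r) ^ 2 := by
    rw [← prod_pow]
    exact prod_congr rfl fun r hr => if_pos (by simp only [mem_Ico] at hr; omega)
  have hlin : (∏ r ∈ Ico (k + 1) (m + 3), if r ≤ k then a r ^ 2 else a r) =
      ∏ r ∈ Ico (k + 1) (m + 3), a r :=
    prod_congr rfl fun r hr => if_neg (by simp only [mem_Ico] at hr; omega)
  rw [hIco, ← prod_Ico_consecutive _ (show 2 ≤ k + 1 by omega) (show k + 1 ≤ m + 3 by omega),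
    hsq, hlin, prod_eq_prod_Ico_succ_bot (show 2 < k + 1 by omega),
    prod_Ico_succ_top (show k + 1 ≤ m + 2 by omega),
    prod_Ico_succ_top (show k + 1 ≤ m + 1 by omega)]

lemma quadricDetFormula_mul {n : ℕ} (hn : 3 ≤ n) (a : ℕ → R) :
    quadricDetFormula (n + 2) a *
        ((a 2 - a ((n + 2) / 2 + 1)) * a 2 * ((a n - a (n + 1)) * a n * a (n + 1))) =
      (vandermonde fun c : Fin n => a (c + 2)).det *
        (∏ c : Fin n, if (c : ℕ) + 2 ≤ (n + 2) / 2 then a (c + 2) ^ 2 else a (c + 2)) *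
        ((a 1 - a 2) * (a 1 * (a (n + 1) - a n))) := by
  obtain ⟨m, rfl⟩ : ∃ m, n = m + 1 := ⟨n - 1, by omega⟩
  set k := (m + 1 + 2) / 2 with hk_def
  have hk : 2 ≤ k ∧ k ≤ m := by omega
  have hV := det_vandermonde_succ_shift a 2 m
  simp only [Nat.reduceAdd] at hV
  have hP4 : ∏ j ∈ Icc 1 (m + 1 + 2 - 3), a j =
      a 1 * a 2 * (∏ r ∈ Ico 3 (k + 1), a r) * ∏ r ∈ Ico (k + 1) (m + 1), a r := by
    rw [show Icc 1 (m + 1 + 2 - 3) = Ico 1 (m + 1) by ext; simp only [mem_Icc, mem_Ico]; omega,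
      ← prod_Ico_consecutive _ (show 1 ≤ k + 1 by omega) (show k + 1 ≤ m + 1 by omega),
      prod_eq_prod_Ico_succ_bot (show 1 < k + 1 by omega),
      prod_eq_prod_Ico_succ_bot (show 2 < k + 1 by omega)]
    ring
  rw [quadricDetFormula, ← hk_def, hV, prod_ite_sq_eq (by omega) hk.2, hP4,
    show Icc 3 (m + 1 + 2 - 1) = Ico 3 (3 + m) by ext; simp only [mem_Icc, mem_Ico]; omega,
    show ((Icc 1 (m + 1 + 2 - 1)).erase 2).erase (k + 1) =
      insert 1 ((Ico 3 (3 + m)).erase (k + 1)) by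
        ext; simp only [mem_erase, mem_insert, mem_Icc, mem_Ico]; omega,
    show Icc 3 k = Ico 3 (k + 1) by ext; simp only [mem_Icc, mem_Ico]; omega, prod_insert (by simp),
    ← mul_prod_erase (Ico 3 (3 + m)) (fun r => a r - a 2)
      (show k + 1 ∈ Ico 3 (3 + m) by simp only [mem_Ico]; omega)]
  ring

lemma map_quadricMatrix {S : Type*} [CommRing S] (φ : R →+* S) (g : ℕ) (a : ℕ → R) :
    φ.mapMatrix (quadricMatrix g a) = quadricMatrix g (φ ∘ a) := by
  ext h c
  simp only [RingHom.mapMatrix_apply, map_apply, quadricMatrix, of_apply, apply_ite φ,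
    map_geomSum₂, Function.comp_apply]

lemma map_quadricDetFormula {S : Type*} [CommRing S] (φ : R →+* S) (g : ℕ) (a : ℕ → R) :
    φ (quadricDetFormula g a) = quadricDetFormula g (φ ∘ a) := by
  simp only [quadricDetFormula, map_mul, map_prod, map_sub, Function.comp_apply]

theorem det_quadricMatrix {g : ℕ} (hg : 5 ≤ g) (a : ℕ → R) :
    (quadricMatrix g a).det = quadricDetFormula g a := by
  obtain ⟨n, rfl⟩ : ∃ n, g = n + 2 := ⟨g - 2, by omega⟩
  have hn : 3 ≤ n := by omega
  let X : ℕ → MvPolynomial ℕ ℤ := MvPolynomial.X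
  have hX : (quadricMatrix (n + 2) X).det = quadricDetFormula (n + 2) X := by
    have hsub {i j : ℕ} (hij : i ≠ j) : X i - X j ≠ 0 :=
      sub_ne_zero.mpr (MvPolynomial.X_injective.ne hij)
    have hX0 (i : ℕ) : X i ≠ 0 := MvPolynomial.X_ne_zero i
    refine mul_right_cancel₀ ?_
      ((det_quadricMatrix_mul X hn).trans (quadricDetFormula_mul hn X).symm)
    exact mul_ne_zero (mul_ne_zero (hsub (by omega)) (hX0 _))
      (mul_ne_zero (mul_ne_zero (hsub (by omega)) (hX0 _)) (hX0 _))
  have hφ := congrArg (MvPolynomial.eval₂Hom (Int.castRingHom R) a) hX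
  rwa [RingHom.map_det, map_quadricMatrix, map_quadricDetFormula,
    show (MvPolynomial.eval₂Hom (Int.castRingHom R) a) ∘ X = a from
      funext fun i => MvPolynomial.eval₂_X _ _ _] at hφ

end BinaryCurveQuadrics

/-- Formula (15): the determinant of the `g × g` matrix whose rows are indexed by
`h = 0,...,g-1` and whose columns are (writing `k = ⌊g/2⌋` and `q_{m;i,j} = ∑_{l=0}^m a_i^l a_j^{m-l}`
for `m ≥ 0`, `q_{m;i,j} = 0` for `m < 0`): the columns `(q_{h;1,j})_h` for `j = 2,...,k`,
the columns `(q_{h-1;1,j})_h` for `j = k+1,...,g-1`, the column `(q_{h-1;2,k+1})_h` and the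
column `(q_{h-2;g-2,g-1})_h`, equals, up to sign,
`V(a_3,...,a_{g-1}) · ∏_{r=1, r≠2, k+1}^{g-1} (a_r - a_2) · ∏_{s=3}^{k} a_s · ∏_{j=1}^{g-3} a_j`,
where `V` is the Vandermonde determinant. -/
theorem stmt4 {K : Type*} [Field K] (g : ℕ) (hg : 6 ≤ g) (a : ℕ → K)
    (qq : ℤ → ℕ → ℕ → K)
    (hqq : ∀ (m : ℤ) (i j : ℕ), qq m i j =
      if m < 0 then 0 else ∑ l ∈ Finset.range (m.toNat + 1), a i ^ l * a j ^ (m.toNat - l))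
    (M : Matrix (Fin g) (Fin g) K)
    (hM : ∀ (h c : Fin g),
      M h c =
        if (c : ℕ) + 2 ≤ g / 2 then qq ((h : ℕ) : ℤ) 1 ((c : ℕ) + 2)
        else if (c : ℕ) ≤ g - 3 then qq (((h : ℕ) : ℤ) - 1) 1 ((c : ℕ) + 2)
        else if (c : ℕ) = g - 2 then qq (((h : ℕ) : ℤ) - 1) 2 (g / 2 + 1)
        else qq (((h : ℕ) : ℤ) - 2) (g - 2) (g - 1)) :
    ∃ ε : K, (ε = 1 ∨ ε = -1) ∧
      M.det = ε *
        (∏ p ∈ (Finset.Icc 3 (g - 1) ×ˢ Finset.Icc 3 (g - 1)).filter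
            (fun p => p.1 < p.2), (a p.2 - a p.1)) *
        (∏ r ∈ ((Finset.Icc 1 (g - 1)).erase 2).erase (g / 2 + 1), (a r - a 2)) *
        (∏ s ∈ Finset.Icc 3 (g / 2), a s) *
        (∏ j ∈ Finset.Icc 1 (g - 3), a j) := by
  have hMq : M = BinaryCurveQuadrics.quadricMatrix g a := by
    ext h c
    have e₀ : (((h : ℕ) : ℤ) + 1).toNat = h + 1 := by omega
    have e₁ : (((h : ℕ) : ℤ) - 1 + 1).toNat = h := by omega
    have e₂ : (((h : ℕ) : ℤ) - 2 + 1).toNat = h - 1 := by omega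
    simp only [hM, hqq, BinaryCurveQuadrics.ite_sum_eq_geomSum₂, e₀, e₁, e₂,
      BinaryCurveQuadrics.quadricMatrix, of_apply]
  refine ⟨1, Or.inl rfl, ?_⟩
  rw [hMq, BinaryCurveQuadrics.det_quadricMatrix (by omega), one_mul,
    BinaryCurveQuadrics.quadricDetFormula]
end

section
/- For g ≥ 6 and a general choice of parameters a_{i,k} ∈ ℂ (k = 1,2, i = 1,...,g-1), the g × (g-1)(g-2)/2 matrix M = (q̃_{h,k;i,j})_{0≤h≤g-1, 1≤i<j≤g-1} (for either k = 1 or k = 2), with entries q̃_{0;i,j} = δ_i δ_j, q̃_{1;i,j} = q_{1;i,j}δ_i δ_j − (δ_i c_j + c_i δ_j), q̃_{r;i,j} = q_{r;i,j}δ_i δ_j − q_{r-1;i,j}(δ_i c_j + c_i δ_j) + q_{r-2;i,j} c_i c_j for r ≥ 2, where q_{h;i,j} = Σ_{m=0}^h a_i^m a_j^{h-m}, has maximal rank g. (Here the δ's and c's are the specific values: δ_i = 1 for i ≤ [g/2], δ_i = 0 otherwise; c_i = 0 for i ≤ [g/2], c_i a suitable nonzero multiple of a_i otherwise.) -/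
open Finset
open Matrix

private lemma sum_factor {n : ℕ} (v : Fin n → ℂ) (E : Fin n → ℕ) (c x y : ℂ) :
    c * ((∑ h : Fin n, v h * x ^ E h) - ∑ h : Fin n, v h * y ^ E h)
      = ∑ h : Fin n, v h * (c * (x ^ E h - y ^ E h)) := by
  rw [mul_sub, Finset.mul_sum, Finset.mul_sum, ← Finset.sum_sub_distrib]
  exact Finset.sum_congr rfl fun h _ => by ring

private lemma sum_factor' {n : ℕ} (v : Fin n → ℂ) (x y : ℂ) :
    x * (∑ h : Fin n, v h * x ^ (h : ℕ)) - y * ∑ h : Fin n, v h * y ^ (h : ℕ)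
      = ∑ h : Fin n, v h * (x ^ ((h : ℕ) + 1) - y ^ ((h : ℕ) + 1)) := by
  rw [Finset.mul_sum, Finset.mul_sum, ← Finset.sum_sub_distrib]
  exact Finset.sum_congr rfl fun h _ => by ring

/-- Proposition 4.2: for `g ≥ 6` and a general choice of parameters (it suffices to exhibit one
choice of distinct nonzero `a_i` and a nonzero multiplier `d`), the `g × (g-1)(g-2)/2` matrix
`(q̃_{h;i,j})_{0≤h≤g-1, 1≤i<j≤g-1}` built from `δ_i = 1` for `i ≤ ⌊g/2⌋`, `δ_i = 0` otherwise,
`c_i = 0` for `i ≤ ⌊g/2⌋`, `c_i = d·a_i` otherwise, has maximal rank `g`.  (Columns are indexed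
by all pairs, with the entry set to `0` unless `i < j`; this does not change the rank.) -/
theorem stmt5 (g : ℕ) (hg : 6 ≤ g) :
    ∃ (a : ℕ → ℂ) (d : ℂ), d ≠ 0 ∧
      (∀ i ∈ Finset.Icc 1 (g - 1), a i ≠ 0) ∧
      Set.InjOn a (Finset.Icc 1 (g - 1)) ∧
      ∀ (δ c : ℕ → ℂ),
        (∀ i, δ i = if i ≤ g / 2 then 1 else 0) →
        (∀ i, c i = if i ≤ g / 2 then 0 else d * a i) →
        ∀ (q : ℕ → ℕ → ℕ → ℂ),
          (∀ h i j, q h i j = ∑ m ∈ Finset.range (h + 1), a i ^ m * a j ^ (h - m)) →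
          ∀ (qt : ℕ → ℕ → ℕ → ℂ),
            (∀ i j, qt 0 i j = δ i * δ j) →
            (∀ i j, qt 1 i j = q 1 i j * (δ i * δ j) - (δ i * c j + c i * δ j)) →
            (∀ r i j, 2 ≤ r →
              qt r i j = q r i j * (δ i * δ j) - q (r - 1) i j * (δ i * c j + c i * δ j)
                + q (r - 2) i j * (c i * c j)) →
            (Matrix.of fun (h : Fin g) (p : Fin (g - 1) × Fin (g - 1)) =>
              if (p.1 : ℕ) < (p.2 : ℕ) then qt (h : ℕ) ((p.1 : ℕ) + 1) ((p.2 : ℕ) + 1)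
              else 0).rank = g := by
  refine ⟨fun i => (i : ℂ), 1, one_ne_zero, ?_, ?_, ?_⟩
  · intro i hi
    simp only [Finset.mem_Icc] at hi
    exact Nat.cast_ne_zero.mpr (by omega)
  · intro x _ y _ h
    exact Nat.cast_injective h
  intro δ c hδ hc q hq qt hqt0 hqt1 hqt2
  haveI : NeZero g := ⟨by omega⟩
  set m := g / 2 with hm
  have hm3 : 3 ≤ m := by omega
  have hmg : m + 2 ≤ g - 1 := by omega
  -- δ and c values
  have hδ1 : ∀ i, i ≤ m → δ i = 1 := fun i hi => by rw [hδ]; simp [hi]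
  have hδ0 : ∀ i, m < i → δ i = 0 := fun i hi => by rw [hδ]; simp [Nat.not_le.mpr hi]
  have hc0 : ∀ i, i ≤ m → c i = 0 := fun i hi => by rw [hc]; simp [hi]
  have hc1 : ∀ i, m < i → c i = (i : ℂ) := fun i hi => by
    rw [hc]; simp [Nat.not_le.mpr hi]
  -- the geometric-sum identity
  have hqm : ∀ (h i j : ℕ), q h i j * ((i : ℂ) - (j : ℂ)) = (i : ℂ) ^ (h + 1) - (j : ℂ) ^ (h + 1) := by
    intro h i j
    rw [hq]
    have := geom_sum₂_mul (i : ℂ) (j : ℂ) (h + 1)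
    simpa using this
  -- the three per-case identities
  have hLL : ∀ i j : ℕ, i ≤ m → j ≤ m → ∀ h : ℕ,
      qt h i j * ((i : ℂ) - (j : ℂ)) = (i : ℂ) ^ (h + 1) - (j : ℂ) ^ (h + 1) := by
    intro i j hi hj h
    match h with
    | 0 => rw [hqt0, hδ1 i hi, hδ1 j hj]; simp [pow_one]
    | 1 =>
      rw [hqt1, hδ1 i hi, hδ1 j hj, hc0 i hi, hc0 j hj]
      have := hqm 1 i j
      linear_combination this
    | (r + 2) =>
      rw [hqt2 _ _ _ (by omega), hδ1 i hi, hδ1 j hj, hc0 i hi, hc0 j hj]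
      have := hqm (r + 2) i j
      linear_combination this
  have hML : ∀ i j : ℕ, i ≤ m → m < j → ∀ h : ℕ,
      qt h i j * ((i : ℂ) - (j : ℂ)) = -(j : ℂ) * ((i : ℂ) ^ h - (j : ℂ) ^ h) := by
    intro i j hi hj h
    match h with
    | 0 => rw [hqt0, hδ1 i hi, hδ0 j hj]; simp
    | 1 =>
      rw [hqt1, hδ1 i hi, hδ0 j hj, hc0 i hi, hc1 j hj]
      simp [pow_one]
    | (r + 2) =>
      rw [hqt2 _ _ _ (by omega), hδ1 i hi, hδ0 j hj, hc0 i hi, hc1 j hj]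
      have := hqm (r + 1) i j
      have hr1 : r + 2 - 1 = r + 1 := rfl
      have hr2 : r + 2 - 2 = r := rfl
      rw [hr1, hr2]
      linear_combination (-(j : ℂ)) * this
  have hRR : ∀ i j : ℕ, m < i → m < j → ∀ h : ℕ,
      qt h i j * ((i : ℂ) - (j : ℂ))
        = (i : ℂ) * (j : ℂ) * ((i : ℂ) ^ (h - 1) - (j : ℂ) ^ (h - 1)) := by
    intro i j hi hj h
    match h with
    | 0 => rw [hqt0, hδ0 i hi, hδ0 j hj]; simp
    | 1 => rw [hqt1, hδ0 i hi, hδ0 j hj]; simp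
    | (r + 2) =>
      rw [hqt2 _ _ _ (by omega), hδ0 i hi, hδ0 j hj, hc1 i hi, hc1 j hj]
      have := hqm r i j
      have hr2 : r + 2 - 2 = r := rfl
      have hr1 : r + 2 - 1 = r + 1 := rfl
      rw [hr2, hr1]
      linear_combination ((i : ℂ) * (j : ℂ)) * this
  -- the main linear-independence statement
  have main : ∀ v : Fin g → ℂ,
      (∀ i j : ℕ, 1 ≤ i → i < j → j ≤ g - 1 → ∑ h : Fin g, qt (h : ℕ) i j * v h = 0) →
      v = 0 := by
    intro v hcol
    set F : ℕ → ℂ := fun k => ∑ h : Fin g, v h * (k : ℂ) ^ (h : ℕ) with hF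
    set E : ℕ → ℂ := fun k => ∑ h : Fin g, v h * (k : ℂ) ^ ((h : ℕ) - 1) with hE
    -- mixed pairs give equal F-values
    have keyML : ∀ i j : ℕ, 1 ≤ i → i ≤ m → m < j → j ≤ g - 1 → F i = F j := by
      intro i j h1 h2 h3 h4
      have hS := hcol i j h1 (by omega) h4
      have h0 : ∑ h : Fin g, qt (h : ℕ) i j * v h * ((i : ℂ) - (j : ℂ)) = 0 := by
        rw [← Finset.sum_mul, hS, zero_mul]
      have h1' : ∑ h : Fin g, v h * (-(j : ℂ) * ((i : ℂ) ^ (h : ℕ) - (j : ℂ) ^ (h : ℕ))) = 0 := by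
        rw [← h0]
        exact Finset.sum_congr rfl fun h _ => by rw [← hML i j h2 h3 (h : ℕ)]; ring
      have h2' : -(j : ℂ) * (F i - F j) = 0 := by
        rw [hF]
        exact (sum_factor v (fun h => (h : ℕ)) (-(j : ℂ)) (i : ℂ) (j : ℂ)).trans h1'
      have hjne : -(j : ℂ) ≠ 0 := by
        simp only [neg_ne_zero, Nat.cast_ne_zero]; omega
      exact sub_eq_zero.mp ((mul_eq_zero.mp h2').resolve_left hjne)
    -- all F-values on [1, g-1] agree
    have hFall : ∀ k : ℕ, 1 ≤ k → k ≤ g - 1 → F k = F (g - 1) := by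
      intro k h1 h2
      by_cases hk : k ≤ m
      · exact keyML k (g - 1) h1 hk (by omega) le_rfl
      · have e1 : F 1 = F k := keyML 1 k le_rfl (by omega) (by omega) h2
        have e2 : F 1 = F (g - 1) := keyML 1 (g - 1) le_rfl (by omega) (by omega) le_rfl
        rw [← e1, e2]
    -- the (1,2) left-left pair gives F (g-1) = 0
    have hFzero : ∀ k : ℕ, 1 ≤ k → k ≤ g - 1 → F k = 0 := by
      have hS := hcol 1 2 le_rfl one_lt_two (by omega)
      have h0 : ∑ h : Fin g, qt (h : ℕ) 1 2 * v h * (((1 : ℕ) : ℂ) - ((2 : ℕ) : ℂ)) = 0 := by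
        rw [← Finset.sum_mul, hS, zero_mul]
      have h1' : ∑ h : Fin g,
          v h * (((1 : ℕ) : ℂ) ^ ((h : ℕ) + 1) - ((2 : ℕ) : ℂ) ^ ((h : ℕ) + 1)) = 0 := by
        rw [← h0]
        exact Finset.sum_congr rfl fun h _ => by
          rw [← hLL 1 2 (by omega) (by omega) (h : ℕ)]; ring
      have h2' : ((1 : ℕ) : ℂ) * F 1 - ((2 : ℕ) : ℂ) * F 2 = 0 := by
        rw [hF]
        exact (sum_factor' v ((1 : ℕ) : ℂ) ((2 : ℕ) : ℂ)).trans h1'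
      have e1 : F 1 = F (g - 1) := hFall 1 le_rfl (by omega)
      have e2 : F 2 = F (g - 1) := hFall 2 (by omega) (by omega)
      rw [e1, e2] at h2'
      push_cast at h2'
      have ht : F (g - 1) = 0 := by linear_combination -h2'
      intro k h1 h2
      rw [hFall k h1 h2, ht]
    -- relation between E and F
    have hxE : ∀ k : ℕ, (k : ℂ) * E k - F k = v 0 * (k : ℂ) - v 0 := by
      intro k
      rw [hE, hF]
      rw [Finset.mul_sum, ← Finset.sum_sub_distrib]
      rw [Finset.sum_eq_single (0 : Fin g)]
      · simp; ring
      · intro b _ hb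
        have hb' : 1 ≤ (b : ℕ) := by
          rcases Nat.eq_zero_or_pos (b : ℕ) with h | h
          · exact absurd (Fin.ext (by simp [h])) hb
          · exact h
        have hpow : (k : ℂ) ^ ((b : ℕ) - 1) * (k : ℂ) = (k : ℂ) ^ (b : ℕ) := by
          rw [← pow_succ, Nat.sub_add_cancel hb']
        linear_combination v b * hpow
      · intro habs; exact absurd (Finset.mem_univ _) habs
    -- right-right pair (m+1, m+2) gives v 0 = 0
    have hv0 : v 0 = 0 := by
      have hS := hcol (m + 1) (m + 2) (by omega) (by omega) hmg
      have h0 : ∑ h : Fin g,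
          qt (h : ℕ) (m + 1) (m + 2) * v h * (((m + 1 : ℕ) : ℂ) - ((m + 2 : ℕ) : ℂ)) = 0 := by
        rw [← Finset.sum_mul, hS, zero_mul]
      have h1' : ∑ h : Fin g, v h * (((m + 1 : ℕ) : ℂ) * ((m + 2 : ℕ) : ℂ) *
          (((m + 1 : ℕ) : ℂ) ^ ((h : ℕ) - 1) - ((m + 2 : ℕ) : ℂ) ^ ((h : ℕ) - 1))) = 0 := by
        rw [← h0]
        exact Finset.sum_congr rfl fun h _ => by
          rw [← hRR (m + 1) (m + 2) (by omega) (by omega) (h : ℕ)]; ring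
      have h2' : ((m + 1 : ℕ) : ℂ) * ((m + 2 : ℕ) : ℂ) * (E (m + 1) - E (m + 2)) = 0 := by
        rw [hE]
        exact (sum_factor v (fun h => (h : ℕ) - 1)
          (((m + 1 : ℕ) : ℂ) * ((m + 2 : ℕ) : ℂ)) _ _).trans h1'
      have hne : ((m + 1 : ℕ) : ℂ) * ((m + 2 : ℕ) : ℂ) ≠ 0 := by
        apply mul_ne_zero <;> (simp only [Nat.cast_ne_zero]; omega)
      have hEeq : E (m + 1) = E (m + 2) :=
        sub_eq_zero.mp ((mul_eq_zero.mp h2').resolve_left hne)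
      have hA := hxE (m + 1)
      have hB := hxE (m + 2)
      rw [hFzero (m + 1) (by omega) (by omega)] at hA
      rw [hFzero (m + 2) (by omega) hmg] at hB
      rw [← hEeq] at hB
      push_cast at hA hB
      have ha : E (m + 1) = v 0 := by linear_combination hB - hA
      linear_combination hA - ((m : ℂ) + 1) * ha
    -- Vandermonde: v = 0
    have hF0 : F 0 = v 0 := by
      simp only [hF]
      rw [Finset.sum_eq_single (0 : Fin g)]
      · simp
      · intro b _ hb
        have hb' : 1 ≤ (b : ℕ) := by
          rcases Nat.eq_zero_or_pos (b : ℕ) with h | h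
          · exact absurd (Fin.ext (by simp [h])) hb
          · exact h
        simp [zero_pow (by omega : (b : ℕ) ≠ 0)]
      · intro habs; exact absurd (Finset.mem_univ _) habs
    apply Matrix.eq_zero_of_forall_index_sum_mul_pow_eq_zero
      (f := fun k : Fin g => ((k : ℕ) : ℂ))
    · intro x y hxy
      exact Fin.ext (Nat.cast_injective hxy)
    · intro k
      have : ∑ h : Fin g, v h * ((k : ℕ) : ℂ) ^ (h : ℕ) = F (k : ℕ) := by rw [hF]
      rw [this]
      rcases Nat.eq_zero_or_pos (k : ℕ) with h | h
      · rw [h, hF0, hv0]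
      · exact hFzero (k : ℕ) h (by omega)
  -- conclude the rank computation
  rw [← Matrix.rank_transpose, Matrix.rank]
  have hinj : Function.Injective
      (Matrix.of fun (h : Fin g) (p : Fin (g - 1) × Fin (g - 1)) =>
        if (p.1 : ℕ) < (p.2 : ℕ) then qt (h : ℕ) ((p.1 : ℕ) + 1) ((p.2 : ℕ) + 1)
        else 0)ᵀ.mulVecLin := by
    rw [← LinearMap.ker_eq_bot, LinearMap.ker_eq_bot']
    intro v hv
    apply main v
    intro i j h1 h2 h3
    have hvp := congrFun hv (⟨i - 1, by omega⟩, ⟨j - 1, by omega⟩)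
    simp only [Matrix.mulVecLin_apply, Matrix.mulVec, dotProduct,
      Matrix.transpose_apply, Matrix.of_apply, Pi.zero_apply] at hvp
    rw [← hvp]
    exact Finset.sum_congr rfl fun h _ => by
      rw [if_pos (by omega : i - 1 < j - 1)]
      congr 2 <;> omega
  rw [LinearMap.finrank_range_of_inj hinj]
  exact Module.finrank_fin_fun ℂ
end

section
/- Let g ≥ 6. For a general choice of a_{i,k} (k=1,2, i=1,...,g-1), the linear system of 2g-2 equations Q_{0,1}(s) = ... = Q_{g-1,1}(s) = Q_{1,2}(s) = ... = Q_{g-2,2}(s) = 0 in the (g-1)(g-2)/2 unknowns s_{ij} (1 ≤ i < j ≤ g-1) has maximal rank 2g-2; consequently the space of quadrics containing the Prym-canonical binary curve C = C_1 ∪ C_2 in P^{g-2} has dimension (g-1)(g-2)/2 − (2g-2) = (g²-7g+10)/2, i.e. C is quadratically normal. -/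
/-!
Take `a_{i,1} = i`, `a_{i,2} = 1/i` and `d = 1`; it suffices to show that the `2g - 2` rows of
the coefficient matrix are linearly independent. Since
`q̃_r(x, y) (x - y) = δ_i δ_j (x^{r+1} - y^{r+1}) - (δ_i c_j + c_i δ_j) (x^r - y^r)
  + c_i c_j (x^{r-1} - y^{r-1})`,
a row relation `(w, u)` yields, for every column `i < j`, a linear relation between the values
`φ_i = P(i)`, `ψ_i = Q(1/i)` of `P = ∑ wₙ X^{g-1-n}` and `Q = ∑ uₙ X^{g-2-n}`, whose shape depends
on which of `i, j` exceed `⌊g/2⌋`. Second differences of the mixed relations make `φ` affine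
on `[1, ⌊g/2⌋]` and `ψ` affine on the rest, with a common slope; the relations among `1, 2, 3`
then force `φ ≡ ρ`, `ψ ≡ -ρ` and `P(0) = 0`. Now `Q + ρ` has degree `≤ g - 2` and the `g - 1`
roots `1/i`, so `ρ = 0` and `Q = 0`, and `P` has degree `≤ g - 1` and the `g` roots
`0, 1, …, g - 1`, so `P = 0`.
-/

open Finset

namespace PrymBinaryCurve

section PowerSum

variable {R : Type*} [CommRing R] {ι : Type*} [Fintype ι]

def powerSum (w : ι → R) (e : ι → ℕ) (x : R) : R :=
  ∑ n, w n * x ^ e n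

theorem mul_powerSum_pred (w : ι → R) (e : ι → ℕ) (x : R) :
    x * powerSum w (fun n => e n - 1) x = powerSum w e x + (x - 1) * powerSum w e 0 := by
  simp only [powerSum, mul_sum, ← sum_add_distrib]
  refine sum_congr rfl fun n _ => ?_
  rcases e n with _ | k
  · simp only [zero_tsub, pow_zero]
    ring
  · rw [Nat.add_sub_cancel, zero_pow k.succ_ne_zero]
    ring

theorem powerSum_zero_of_ne_zero {w : ι → R} {e : ι → ℕ} (he : ∀ n, e n ≠ 0) :
    powerSum w e 0 = 0 :=
  sum_eq_zero fun n _ => by rw [zero_pow (he n), mul_zero]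

theorem eq_zero_of_powerSum_eq_zero [IsDomain R] {w : ι → R} {e : ι → ℕ}
    (he : Function.Injective e) (s : Finset R) (hs : ∀ n, e n < #s)
    (h : ∀ x ∈ s, powerSum w e x = 0) : w = 0 := by
  classical
  set p : Polynomial R := ∑ n, Polynomial.C (w n) * Polynomial.X ^ e n
  have hp : p = 0 := by
    refine Polynomial.eq_zero_of_degree_lt_of_eval_finset_eq_zero s ?_ fun x hx => ?_
    · rw [← Polynomial.mem_degreeLT]
      exact Submodule.sum_mem _ fun n _ => Polynomial.mem_degreeLT.mpr <|
        (Polynomial.degree_C_mul_X_pow_le _ _).trans_lt (by exact_mod_cast hs n)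
    · simpa [p, Polynomial.eval_finsetSum, powerSum] using h x hx
  funext n
  have hcoeff : p.coeff (e n) = w n := by
    simp [p, he.eq_iff]
  rw [← hcoeff, hp, Polynomial.coeff_zero, Pi.zero_apply]

end PowerSum

section Twisted

variable {R : Type*} [CommRing R] {x y δi δj ci cj : R}

theorem mul_sub_eq_of_twisted_recursion {q t : ℕ → R}
    (hq : ∀ r, q r = ∑ k ∈ range (r + 1), x ^ k * y ^ (r - k))
    (h0 : t 0 = δi * δj) (h1 : t 1 = q 1 * (δi * δj) - (δi * cj + ci * δj))
    (h2 : ∀ r, 2 ≤ r →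
      t r = q r * (δi * δj) - q (r - 1) * (δi * cj + ci * δj) + q (r - 2) * (ci * cj))
    (r : ℕ) :
    t r * (x - y) = δi * δj * (x ^ (r + 1) - y ^ (r + 1))
      - (δi * cj + ci * δj) * (x ^ r - y ^ r) + ci * cj * (x ^ (r - 1) - y ^ (r - 1)) := by
  have hq_mul : ∀ r, q r * (x - y) = x ^ (r + 1) - y ^ (r + 1) := fun r => by
    simpa [hq] using geom_sum₂_mul x y (r + 1)
  rcases r with _ | _ | r
  · rw [h0]
    ring
  · rw [h1]
    linear_combination δi * δj * hq_mul 1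
  · rw [h2 _ le_add_self]
    simp only [Nat.add_sub_cancel, Nat.reduceSubDiff]
    linear_combination δi * δj * hq_mul (r + 2) - (δi * cj + ci * δj) * hq_mul (r + 1)
      + ci * cj * hq_mul r

variable {ι : Type*} [Fintype ι]

/-- Closed form of `(x - y) ∑ₙ q̃_{eₙ}(x, y) wₙ`. -/
def twistedDiff (δi δj ci cj x y : R) (w : ι → R) (e : ι → ℕ) : R :=
  δi * δj * (x * powerSum w e x - y * powerSum w e y)
    - (δi * cj + ci * δj) * (powerSum w e x - powerSum w e y)
    + ci * cj * (powerSum w (fun n => e n - 1) x - powerSum w (fun n => e n - 1) y)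

theorem sub_mul_sum_eq_twistedDiff {t : ℕ → R}
    (ht : ∀ r, t r * (x - y) = δi * δj * (x ^ (r + 1) - y ^ (r + 1))
      - (δi * cj + ci * δj) * (x ^ r - y ^ r) + ci * cj * (x ^ (r - 1) - y ^ (r - 1)))
    (w : ι → R) (e : ι → ℕ) :
    (x - y) * ∑ n, t (e n) * w n = twistedDiff δi δj ci cj x y w e := by
  simp only [twistedDiff, powerSum, mul_sum, ← sum_sub_distrib, ← sum_add_distrib]
  refine sum_congr rfl fun n _ => ?_
  linear_combination w n * ht (e n)

end Twisted

section TwistedRelations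

variable {K : Type*} [Field K] {ι κ : Type*} [Fintype ι] [Fintype κ]
  {w : ι → K} {e : ι → ℕ} {u : κ → K} {e' : κ → ℕ} {x y : K}

theorem sub_mul_eq_of_add_eq_zero {S S' : K} (hx : x ≠ 0) (hy : y ≠ 0) (h : S + S' = 0) :
    (x - y) * S = x * y * ((x⁻¹ - y⁻¹) * S') := by
  field_simp
  linear_combination (x - y) * h

theorem relation_of_twistedDiff_both_untwisted (hx : x ≠ 0) (hy : y ≠ 0)
    (h : twistedDiff 1 1 0 0 x y w e = x * y * twistedDiff 1 1 0 0 x⁻¹ y⁻¹ u e') :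
    x * (powerSum w e x + powerSum u e' y⁻¹) = y * (powerSum w e y + powerSum u e' x⁻¹) := by
  simp only [twistedDiff] at h
  generalize powerSum u e' x⁻¹ = A, powerSum u e' y⁻¹ = B at h ⊢
  field_simp at h
  linear_combination h

theorem relation_of_twistedDiff_right_twisted (hx : x ≠ 0) (hy : y ≠ 0)
    (h : twistedDiff 1 0 0 (-y) x y w e = x * y * twistedDiff 1 0 0 y⁻¹ x⁻¹ y⁻¹ u e') :
    y * (powerSum w e x - powerSum w e y) + x * (powerSum u e' x⁻¹ - powerSum u e' y⁻¹) = 0 := by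
  simp only [twistedDiff] at h
  generalize powerSum u e' x⁻¹ = A, powerSum u e' y⁻¹ = B at h ⊢
  field_simp at h
  linear_combination h

theorem relation_of_twistedDiff_both_twisted (hx : x ≠ 0) (hy : y ≠ 0) (he' : ∀ n, e' n ≠ 0)
    (h : twistedDiff 0 0 (-x) (-y) x y w e = x * y * twistedDiff 0 0 x⁻¹ y⁻¹ x⁻¹ y⁻¹ u e') :
    y * powerSum w e x - x * powerSum w e y + powerSum w e 0 * (x - y)
      - x * powerSum u e' x⁻¹ + y * powerSum u e' y⁻¹ = 0 := by
  have hx' := mul_powerSum_pred w e x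
  have hy' := mul_powerSum_pred w e y
  have hx'' := mul_powerSum_pred u e' x⁻¹
  have hy'' := mul_powerSum_pred u e' y⁻¹
  rw [powerSum_zero_of_ne_zero he'] at hx'' hy''
  simp only [twistedDiff] at h
  generalize powerSum u e' x⁻¹ = A, powerSum u e' y⁻¹ = B,
    powerSum u (fun n => e' n - 1) x⁻¹ = A', powerSum u (fun n => e' n - 1) y⁻¹ = B' at *
  field_simp at h hx'' hy''
  linear_combination h - y * hx' + x * hy' + hx'' - hy''

end TwistedRelations

section ValueRelations

variable {K : Type*} {φ ψ : ℕ → K} {m n : ℕ}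

theorem exists_affine_of_cross_relation [CommRing K] (hm : 2 ≤ m) (hn : m + 2 ≤ n)
    (hB : ∀ I J : ℕ, 1 ≤ I → I ≤ m → m < J → J ≤ n →
      (J : K) * (φ I - φ J) + I * (ψ I - ψ J) = 0) :
    ∃ a ρ σ : K, (∀ i, 1 ≤ i → i ≤ m → φ i = a * i + ρ) ∧
      (∀ j, m < j → j ≤ n → ψ j = a * j + σ) ∧
      ∀ i j, 1 ≤ i → i ≤ m → m < j → j ≤ n → (i : K) * (ψ i - σ) = j * (φ j - ρ) := by
  have hmixed : ∀ I I' J J', 1 ≤ I → I ≤ m → 1 ≤ I' → I' ≤ m →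
      m < J → J ≤ n → m < J' → J' ≤ n →
      ((J : K) - J') * (φ I - φ I') = ((I : K) - I') * (ψ J - ψ J') := by
    intro I I' J J' hI hIm hI' hI'm hJ hJn hJ' hJ'n
    linear_combination hB I J hI hIm hJ hJn - hB I J' hI hIm hJ' hJ'n - hB I' J hI' hI'm hJ hJn
      + hB I' J' hI' hI'm hJ' hJ'n
  set a := ψ (m + 2) - ψ (m + 1)
  have hφ : ∀ i, 1 ≤ i → i ≤ m → φ i = a * i + (φ 1 - a) := fun i hi him => by
    have := hmixed i 1 (m + 2) (m + 1) hi him le_rfl (by omega) (by omega) hn (by omega) (by omega)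
    push_cast at this
    linear_combination this
  have hψ : ∀ j, m < j → j ≤ n → ψ j = a * j + (ψ (m + 1) - a * (m + 1)) := fun j hj hjn => by
    have := hmixed 2 1 j (m + 1) (by omega) hm le_rfl (by omega) hj hjn (by omega) (by omega)
    have h21 := hφ 2 (by omega) hm
    push_cast at this h21
    linear_combination -this + ((j : K) - m - 1) * h21
  refine ⟨a, _, _, hφ, hψ, fun i j hi him hj hjn => ?_⟩
  linear_combination hB i j hi him hj hjn - (j : K) * hφ i hi him + (i : K) * hψ j hj hjn

variable [Field K] [CharZero K]

theorem affine_coeffs_eq_zero_of_relation {a ρ σ τ : K}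
    (hA : ∀ I J : ℕ, 1 ≤ I → I < J → J ≤ 3 → (I : K) * (φ I + ψ J) = J * (φ J + ψ I))
    (hφ : ∀ i : ℕ, 1 ≤ i → i ≤ 3 → φ i = a * i + ρ)
    (hψ : ∀ i : ℕ, 1 ≤ i → i ≤ 3 → (i : K) * (ψ i - σ) = τ) :
    a = 0 ∧ τ = 0 ∧ ρ + σ = 0 := by
  have h12 := hA 1 2 le_rfl one_lt_two (by norm_num)
  have h13 := hA 1 3 le_rfl (by norm_num) le_rfl
  have h23 := hA 2 3 (by norm_num) (by norm_num) le_rfl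
  have φ1 := hφ 1 le_rfl (by norm_num)
  have φ2 := hφ 2 (by norm_num) (by norm_num)
  have φ3 := hφ 3 (by norm_num) le_rfl
  have ψ1 := hψ 1 le_rfl (by norm_num)
  have ψ2 := hψ 2 (by norm_num) (by norm_num)
  have ψ3 := hψ 3 (by norm_num) le_rfl
  push_cast at h12 h13 h23 φ1 φ2 φ3 ψ1 ψ2 ψ3
  -- the pair `I < J` gives `I J (I + J) a + I J (ρ + σ) + (I + J) τ = 0`
  have e12 : 6 * a + 2 * (ρ + σ) + 3 * τ = 0 := by
    linear_combination -2 * h12 + 2 * φ1 - 4 * φ2 - 4 * ψ1 + ψ2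
  have e13 : 12 * a + 3 * (ρ + σ) + 4 * τ = 0 := by
    linear_combination (-3/2 : K) * h13 + (3/2 : K) * φ1 - (9/2 : K) * φ3 - (9/2 : K) * ψ1
      + (1/2 : K) * ψ3
  have e23 : 30 * a + 6 * (ρ + σ) + 5 * τ = 0 := by
    linear_combination -6 * h23 + 12 * φ2 - 18 * φ3 - 9 * ψ2 + 4 * ψ3
  refine ⟨?_, ?_, ?_⟩
  · linear_combination (-3/4 : K) * e12 + (2/3 : K) * e13 - (1/12 : K) * e23
  · linear_combination (-3/2 : K) * e12 + 2 * e13 - (1/2 : K) * e23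
  · linear_combination 5 * e12 - 5 * e13 + e23

theorem exists_eq_const_of_relations {lam : K} (hm : 3 ≤ m) (hn : m + 2 ≤ n)
    (hA : ∀ I J : ℕ, 1 ≤ I → I < J → J ≤ m → (I : K) * (φ I + ψ J) = J * (φ J + ψ I))
    (hB : ∀ I J : ℕ, 1 ≤ I → I ≤ m → m < J → J ≤ n →
      (J : K) * (φ I - φ J) + I * (ψ I - ψ J) = 0)
    (hC : ∀ I J : ℕ, m < I → I < J → J ≤ n →
      (J : K) * φ I - I * φ J + lam * (I - J) - I * ψ I + J * ψ J = 0) :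
    ∃ ρ, (∀ i, 1 ≤ i → i ≤ n → φ i = ρ ∧ ψ i = -ρ) ∧ lam = 0 := by
  obtain ⟨a, ρ, σ, hφ, hψ, hcross⟩ := exists_affine_of_cross_relation (by omega) hn hB
  have hτ : ∀ i, 1 ≤ i → i ≤ m → (i : K) * (ψ i - σ) = ψ 1 - σ := fun i hi him => by
    linear_combination hcross i (m + 1) hi him (by omega) (by omega)
      - hcross 1 (m + 1) le_rfl (by omega) (by omega) (by omega)
  obtain ⟨ha, hτ0, hρσ⟩ := affine_coeffs_eq_zero_of_relation
    (fun I J hI hIJ hJ => hA I J hI hIJ (by omega))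
    (fun i hi _ => hφ i hi (by omega)) (fun i hi _ => hτ i hi (by omega))
  have hcast : ∀ i : ℕ, 1 ≤ i → (i : K) ≠ 0 := fun i hi => Nat.cast_ne_zero.mpr (by omega)
  have hval : ∀ i, 1 ≤ i → i ≤ n → φ i = ρ ∧ ψ i = -ρ := by
    intro i hi hin
    rcases le_or_gt i m with him | him
    · refine ⟨by rw [hφ i hi him, ha, zero_mul, zero_add], mul_left_cancel₀ (hcast i hi) ?_⟩
      linear_combination hτ i hi him + hτ0 + (i : K) * hρσ
    · refine ⟨mul_left_cancel₀ (hcast i hi) ?_, by rw [hψ i him hin, ha]; linear_combination hρσ⟩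
      linear_combination -hcross 1 i le_rfl (by omega) him hin + hτ0
  refine ⟨ρ, hval, ?_⟩
  obtain ⟨hφ1, hψ1⟩ := hval (m + 1) (by omega) (by omega)
  obtain ⟨hφ2, hψ2⟩ := hval (m + 2) (by omega) hn
  have := hC (m + 1) (m + 2) (by omega) (by omega) hn
  rw [hφ1, hφ2, hψ1, hψ2] at this
  push_cast at this
  linear_combination -this

end ValueRelations

theorem eq_zero_of_powerSum_eq_const {K : Type*} [Field K] [CharZero K] {g : ℕ} (hg : 2 ≤ g)
    {w : Fin g → K} {u : Fin (g - 2) → K} {ρ : K}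
    (hw : ∀ i, 1 ≤ i → i ≤ g - 1 → powerSum w (fun n => g - 1 - n) (i : K) = ρ)
    (hw0 : powerSum w (fun n => g - 1 - n) 0 = 0)
    (hu : ∀ i, 1 ≤ i → i ≤ g - 1 → powerSum u (fun n => g - 2 - n) (i : K)⁻¹ = -ρ) :
    w = 0 ∧ u = 0 := by
  classical
  -- `ρ` enters as the coefficient of `X ^ 0`, next to `u`.
  have hu' : (fun o : Option (Fin (g - 2)) => o.elim ρ u) = 0 := by
    refine eq_zero_of_powerSum_eq_zero (e := fun o => o.elim 0 fun n => g - 2 - n) ?_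
      ((Icc 1 (g - 1)).image fun i : ℕ => (i : K)⁻¹) ?_ fun x hx => ?_
    · rintro (_ | a) (_ | b) h <;> simp only [Option.elim, Option.some.injEq, reduceCtorEq] at h ⊢
        <;> omega
    · rw [card_image_of_injective (f := fun i : ℕ => (i : K)⁻¹) _
        (inv_injective.comp Nat.cast_injective), Nat.card_Icc]
      rintro (_ | n) <;> dsimp only [Option.elim] <;> omega
    · obtain ⟨i, hi, rfl⟩ := mem_image.mp hx
      rw [mem_Icc] at hi
      have := hu i hi.1 hi.2
      unfold powerSum at this ⊢
      simp only [Fintype.sum_option, Option.elim, pow_zero, mul_one]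
      linear_combination this
  have hρ : ρ = 0 := congrFun hu' none
  refine ⟨eq_zero_of_powerSum_eq_zero (e := fun n : Fin g => g - 1 - n)
    (fun a b h => Fin.ext (by dsimp only at h; omega)) ((range g).image Nat.cast) ?_ fun x hx => ?_,
    funext fun n => congrFun hu' (some n)⟩
  · rw [card_image_of_injective _ Nat.cast_injective, card_range]
    omega
  · obtain ⟨i, hi, rfl⟩ := mem_image.mp hx
    rcases Nat.eq_zero_or_pos i with rfl | hi0
    · simpa using hw0
    · rw [hw i hi0 (by rw [mem_range] at hi; omega), hρ]

theorem card_subtype_fst_lt_snd (N : ℕ) :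
    Fintype.card {p : Fin N × Fin N // p.1 < p.2} = N * (N - 1) / 2 := by
  have e : {p : Fin N × Fin N // p.1 < p.2} ≃ Σ j : Fin N, Fin j :=
    { toFun := fun p => ⟨p.1.2, ⟨p.1.1, p.2⟩⟩
      invFun := fun x => ⟨(⟨x.2, x.2.isLt.trans x.1.isLt⟩, x.1), x.2.isLt⟩
      left_inv := fun _ => rfl
      right_inv := fun _ => rfl }
  rw [Fintype.card_congr e, Fintype.card_sigma]
  simp only [Fintype.card_fin]
  rw [Fin.sum_univ_eq_sum_range (fun i => i) N, sum_range_id]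

theorem finrank_ker_mulVecLin_of_linearIndependent_row {m n K : Type*} [Fintype m]
    [Fintype n] [Field K] {M : Matrix m n K} (h : LinearIndependent K M.row) :
    Module.finrank K (LinearMap.ker M.mulVecLin) = Fintype.card n - Fintype.card m := by
  have := LinearMap.finrank_range_add_finrank_ker M.mulVecLin
  rw [← Matrix.rank, h.rank_matrix, Module.finrank_fintype_fun_eq_card] at this
  omega

variable {K : Type*} [Field K] {g : ℕ} {qt : Fin 2 → ℕ → ℕ → ℕ → K}
  {M : Matrix (Fin g ⊕ Fin (g - 2)) {p : Fin (g - 1) × Fin (g - 1) // p.1 < p.2} K}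

theorem column_eq_zero_of_row_relation
    (hM0 : ∀ (n : Fin g) (p : {p : Fin (g - 1) × Fin (g - 1) // p.1 < p.2}),
      M (Sum.inl n) p = qt 0 (g - 1 - n) ((p.1.1 : ℕ) + 1) ((p.1.2 : ℕ) + 1))
    (hM1 : ∀ (n : Fin (g - 2)) (p : {p : Fin (g - 1) × Fin (g - 1) // p.1 < p.2}),
      M (Sum.inr n) p = qt 1 (g - 1 - ((n : ℕ) + 1)) ((p.1.1 : ℕ) + 1) ((p.1.2 : ℕ) + 1))
    {v : Fin g ⊕ Fin (g - 2) → K} (hv : ∑ r, v r • M.row r = 0)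
    {I J : ℕ} (hI : 1 ≤ I) (hIJ : I < J) (hJ : J ≤ g - 1) :
    ∑ n : Fin g, qt 0 (g - 1 - n) I J * v (.inl n)
      + ∑ n : Fin (g - 2), qt 1 (g - 2 - n) I J * v (.inr n) = 0 := by
  have := congrFun hv ⟨(⟨I - 1, by omega⟩, ⟨J - 1, by omega⟩), by rw [Fin.mk_lt_mk]; omega⟩
  simp only [Finset.sum_apply, Pi.smul_apply, Matrix.row, smul_eq_mul, Fintype.sum_sum_type,
    hM0, hM1, Pi.zero_apply, Nat.sub_add_cancel hI, Nat.sub_add_cancel (hI.trans hIJ.le)] at this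
  rw [← this]
  congr 1 <;> refine sum_congr rfl fun n _ => ?_
  · ring
  · rw [mul_comm, show g - 1 - ((n : ℕ) + 1) = g - 2 - n by omega]

theorem linearIndependent_row [CharZero K] (hg : 6 ≤ g)
    {δ : ℕ → K} {c : Fin 2 → ℕ → K} {q : Fin 2 → ℕ → ℕ → ℕ → K}
    (hδ : ∀ i, δ i = if i ≤ g / 2 then 1 else 0)
    (hc0 : ∀ i, c 0 i = if i ≤ g / 2 then 0 else -(i : K))
    (hc1 : ∀ i, c 1 i = if i ≤ g / 2 then 0 else (i : K)⁻¹)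
    (hq0 : ∀ h i j, q 0 h i j = ∑ m ∈ range (h + 1), (i : K) ^ m * (j : K) ^ (h - m))
    (hq1 : ∀ h i j, q 1 h i j = ∑ m ∈ range (h + 1), (i : K)⁻¹ ^ m * (j : K)⁻¹ ^ (h - m))
    (hqt0 : ∀ k i j, qt k 0 i j = δ i * δ j)
    (hqt1 : ∀ k i j, qt k 1 i j = q k 1 i j * (δ i * δ j) - (δ i * c k j + c k i * δ j))
    (hqt2 : ∀ k r i j, 2 ≤ r →
      qt k r i j = q k r i j * (δ i * δ j) - q k (r - 1) i j * (δ i * c k j + c k i * δ j)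
        + q k (r - 2) i j * (c k i * c k j))
    (hM0 : ∀ (n : Fin g) (p : {p : Fin (g - 1) × Fin (g - 1) // p.1 < p.2}),
      M (Sum.inl n) p = qt 0 (g - 1 - n) ((p.1.1 : ℕ) + 1) ((p.1.2 : ℕ) + 1))
    (hM1 : ∀ (n : Fin (g - 2)) (p : {p : Fin (g - 1) × Fin (g - 1) // p.1 < p.2}),
      M (Sum.inr n) p = qt 1 (g - 1 - ((n : ℕ) + 1)) ((p.1.1 : ℕ) + 1) ((p.1.2 : ℕ) + 1)) :
    LinearIndependent K M.row := by
  rw [Fintype.linearIndependent_iff]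
  intro v hv
  set m := g / 2
  set w : Fin g → K := fun n => v (.inl n)
  set u : Fin (g - 2) → K := fun n => v (.inr n)
  have hcast : ∀ i : ℕ, 1 ≤ i → (i : K) ≠ 0 := fun i hi => Nat.cast_ne_zero.mpr (by omega)
  have hrel : ∀ I J, 1 ≤ I → I < J → J ≤ g - 1 →
      twistedDiff (δ I) (δ J) (c 0 I) (c 0 J) (I : K) J w (fun n => g - 1 - n)
        = I * J * twistedDiff (δ I) (δ J) (c 1 I) (c 1 J) (I : K)⁻¹ (J : K)⁻¹ u
          (fun n => g - 2 - n) := by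
    intro I J hI hIJ hJ
    rw [← sub_mul_sum_eq_twistedDiff (mul_sub_eq_of_twisted_recursion (hq0 · I J) (hqt0 0 I J)
        (hqt1 0 I J) (hqt2 0 · I J)),
      ← sub_mul_sum_eq_twistedDiff (mul_sub_eq_of_twisted_recursion (hq1 · I J) (hqt0 1 I J)
        (hqt1 1 I J) (hqt2 1 · I J))]
    exact sub_mul_eq_of_add_eq_zero (hcast I hI) (hcast J (by omega))
      (column_eq_zero_of_row_relation hM0 hM1 hv hI hIJ hJ)
  obtain ⟨ρ, hρ, hlam⟩ := exists_eq_const_of_relations (m := m) (n := g - 1)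
    (φ := fun i => powerSum w (fun n => g - 1 - n) (i : K))
    (ψ := fun i => powerSum u (fun n => g - 2 - n) (i : K)⁻¹) (by omega) (by omega)
    (fun I J hI hIJ hJ => relation_of_twistedDiff_both_untwisted (hcast I hI)
      (hcast J (by omega))
      (by simpa [hδ, hc0, hc1, hIJ.le.trans hJ, hJ] using hrel I J hI hIJ (by omega)))
    (fun I J hI hIm hJ hJn => relation_of_twistedDiff_right_twisted (hcast I hI)
      (hcast J (by omega))
      (by simpa [hδ, hc0, hc1, hIm, not_le.mpr hJ] using hrel I J hI (by omega) hJn))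
    (fun I J hI hIJ hJn => relation_of_twistedDiff_both_twisted (hcast I (by omega))
      (hcast J (by omega)) (fun n => by omega)
      (by simpa [hδ, hc0, hc1, not_le.mpr hI, not_le.mpr (hI.trans hIJ)] using
        hrel I J (by omega) hIJ hJn))
  obtain ⟨hw, hu⟩ := eq_zero_of_powerSum_eq_const (by omega) (fun i hi hin => (hρ i hi hin).1)
    hlam (fun i hi hin => (hρ i hi hin).2)
  rintro (n | n)
  exacts [congrFun hw n, congrFun hu n]

end PrymBinaryCurve

open PrymBinaryCurve

/-- Proposition 4.3: for `g ≥ 6` and a general choice of parameters (it suffices to exhibit one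
choice), the linear system `Q_{0,1} = ... = Q_{g-1,1} = Q_{1,2} = ... = Q_{g-2,2} = 0` in the
`(g-1)(g-2)/2` unknowns `s_{ij}` (`1 ≤ i < j ≤ g-1`) has maximal rank `2g-2`; consequently the
space of quadrics containing the Prym-canonical binary curve `C = C₁ ∪ C₂ ⊂ P^{g-2}` has
dimension `(g-1)(g-2)/2 - (2g-2)`, i.e. `C` is quadratically normal.  Here
`Q_{n,k}(s) = ∑_{i<j} q̃_{g-1-n,k;i,j} s_{ij}` with the `q̃` built from the Prym-canonical data:
`δ_{i,k} = 1` for `i ≤ ⌊g/2⌋` and `0` otherwise, `c_{i,k} = 0` for `i ≤ ⌊g/2⌋` and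
`c_{i,1} = -d·a_{i,1}`, `c_{i,2} = d·a_{i,2}` otherwise. -/
theorem stmt6 (g : ℕ) (hg : 6 ≤ g) :
    ∃ (a : Fin 2 → ℕ → ℂ) (d : ℂ), d ≠ 0 ∧
      (∀ k, ∀ i ∈ Finset.Icc 1 (g - 1), a k i ≠ 0) ∧
      (∀ k, Set.InjOn (a k) (Finset.Icc 1 (g - 1))) ∧
      ∀ (δ : ℕ → ℂ) (c : Fin 2 → ℕ → ℂ),
        (∀ i, δ i = if i ≤ g / 2 then 1 else 0) →
        (∀ i, c 0 i = if i ≤ g / 2 then 0 else -d * a 0 i) →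
        (∀ i, c 1 i = if i ≤ g / 2 then 0 else d * a 1 i) →
        ∀ (q : Fin 2 → ℕ → ℕ → ℕ → ℂ),
          (∀ k h i j, q k h i j = ∑ m ∈ Finset.range (h + 1), a k i ^ m * a k j ^ (h - m)) →
          ∀ (qt : Fin 2 → ℕ → ℕ → ℕ → ℂ),
            (∀ k i j, qt k 0 i j = δ i * δ j) →
            (∀ k i j, qt k 1 i j = q k 1 i j * (δ i * δ j) - (δ i * c k j + c k i * δ j)) →
            (∀ k r i j, 2 ≤ r →
              qt k r i j = q k r i j * (δ i * δ j) - q k (r - 1) i j * (δ i * c k j + c k i * δ j)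
                + q k (r - 2) i j * (c k i * c k j)) →
            ∀ (M : Matrix (Fin g ⊕ Fin (g - 2))
                {p : Fin (g - 1) × Fin (g - 1) // p.1 < p.2} ℂ),
              (∀ (n : Fin g) (p : {p : Fin (g - 1) × Fin (g - 1) // p.1 < p.2}),
                M (Sum.inl n) p = qt 0 (g - 1 - (n : ℕ)) (((p : Fin (g-1) × Fin (g-1)).1 : ℕ) + 1)
                  (((p : Fin (g-1) × Fin (g-1)).2 : ℕ) + 1)) →
              (∀ (n : Fin (g - 2)) (p : {p : Fin (g - 1) × Fin (g - 1) // p.1 < p.2}),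
                M (Sum.inr n) p = qt 1 (g - 1 - ((n : ℕ) + 1))
                  (((p : Fin (g-1) × Fin (g-1)).1 : ℕ) + 1)
                  (((p : Fin (g-1) × Fin (g-1)).2 : ℕ) + 1)) →
              M.rank = 2 * g - 2 ∧
              Module.finrank ℂ (LinearMap.ker M.mulVecLin) =
                (g - 1) * (g - 2) / 2 - (2 * g - 2) := by
  refine ⟨![fun i => (i : ℂ), fun i => (i : ℂ)⁻¹], 1, one_ne_zero, ?_, ?_, ?_⟩
  · intro k i hi
    have : (i : ℂ) ≠ 0 := Nat.cast_ne_zero.mpr (by rw [Finset.mem_Icc] at hi; omega)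
    fin_cases k <;> simpa
  · intro k
    fin_cases k
    exacts [Nat.cast_injective.injOn, (inv_injective.comp Nat.cast_injective).injOn]
  intro δ c hδ hc0 hc1 q hq qt hqt0 hqt1 hqt2 M hM0 hM1
  have hrows := linearIndependent_row hg hδ (by simpa using hc0) (by simpa using hc1)
    (by simpa using hq 0) (by simpa using hq 1) hqt0 hqt1 hqt2 hM0 hM1
  refine ⟨hrows.rank_matrix.trans ?_,
    (finrank_ker_mulVecLin_of_linearIndependent_row hrows).trans ?_⟩
  · simp only [Fintype.card_sum, Fintype.card_fin]
    omega
  · rw [card_subtype_fst_lt_snd]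
    simp only [Fintype.card_sum, Fintype.card_fin]
    rw [show g - 1 - 1 = g - 2 by omega]
    omega
end
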